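/- Let γ = (X^ref, Y^ref) : ℝ → ℝ² be a differentiable curve, L > 0, p = (X, Y) ∈ ℝ², and suppose θ_P ∈ (0, L) minimizes θ ↦ ‖p − γ(θ)‖² over [0, L]. Suppose that at θ_P the tangent satisfies γ'(θ_P) = r·(cos Φ, sin Φ) for some r > 0 and some angle Φ ∈ ℝ. Then the absolute value of the contouring error at the projection equals the orthogonal distance of p from the curve: |sin Φ · (X − X^ref(θ_P)) − cos Φ · (Y − Y^ref(θ_P))| = ‖p − γ(θ_P)‖ = min over θ ∈ [0, L] of ‖p − γ(θ)‖. -/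

import Mathlib

/-! Since the minimizer is interior, the derivative of the squared distance vanishes there, so
the residual p - γ(θ_P) is orthogonal to the tangent direction (cos Φ, sin Φ). Its length is then
the absolute value of its component along the unit normal (sin Φ, -cos Φ), which is the
contouring error. -/

open Real Set

theorem hasDerivAt_sq_dist_curve {x y : ℝ → ℝ} {x' y' θ : ℝ} (X Y : ℝ)
    (hx : HasDerivAt x x' θ) (hy : HasDerivAt y y' θ) :
    HasDerivAt (fun s => (X - x s) ^ 2 + (Y - y s) ^ 2)
      (-2 * (x' * (X - x θ) + y' * (Y - y θ))) θ := by
  refine (((hx.const_sub X).fun_pow 2).add ((hy.const_sub Y).fun_pow 2)).congr_deriv ?_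
  norm_num
  ring

theorem tangent_orthogonal_of_isLocalMin_sq_dist {x y : ℝ → ℝ} {x' y' θ X Y : ℝ}
    (hx : HasDerivAt x x' θ) (hy : HasDerivAt y y' θ)
    (hmin : IsLocalMin (fun s => (X - x s) ^ 2 + (Y - y s) ^ 2) θ) :
    x' * (X - x θ) + y' * (Y - y θ) = 0 := by
  have h := hmin.hasDerivAt_eq_zero (hasDerivAt_sq_dist_curve X Y hx hy)
  linarith

theorem abs_sin_mul_sub_cos_mul_eq_sqrt {Φ u w : ℝ}
    (horth : cos Φ * u + sin Φ * w = 0) :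
    |sin Φ * u - cos Φ * w| = √(u ^ 2 + w ^ 2) := by
  rw [← sqrt_sq_eq_abs]
  congr 1
  -- Lagrange's identity for the orthonormal frame (cos Φ, sin Φ), (sin Φ, -cos Φ).
  calc (sin Φ * u - cos Φ * w) ^ 2
      = (sin Φ * u - cos Φ * w) ^ 2 + (cos Φ * u + sin Φ * w) ^ 2 := by rw [horth]; ring
    _ = (sin Φ ^ 2 + cos Φ ^ 2) * (u ^ 2 + w ^ 2) := by ring
    _ = u ^ 2 + w ^ 2 := by rw [sin_sq_add_cos_sq, one_mul]

theorem contouring_error_is_orthogonal_distance_general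
    (Xref Yref : ℝ → ℝ) (L : ℝ)
    (X Y : ℝ) (θP : ℝ) (hθP : θP ∈ Set.Ioo 0 L)
    (hmin : IsMinOn (fun θ => (X - Xref θ) ^ 2 + (Y - Yref θ) ^ 2)
      (Set.Icc 0 L) θP)
    (r Φ : ℝ) (hr : 0 < r)
    (hX : HasDerivAt Xref (r * Real.cos Φ) θP)
    (hY : HasDerivAt Yref (r * Real.sin Φ) θP) :
    |Real.sin Φ * (X - Xref θP) - Real.cos Φ * (Y - Yref θP)| =
      Real.sqrt ((X - Xref θP) ^ 2 + (Y - Yref θP) ^ 2) ∧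
    ∀ θ ∈ Set.Icc 0 L,
      Real.sqrt ((X - Xref θP) ^ 2 + (Y - Yref θP) ^ 2) ≤
        Real.sqrt ((X - Xref θ) ^ 2 + (Y - Yref θ) ^ 2) := by
  have hloc := hmin.isLocalMin (Icc_mem_nhds hθP.1 hθP.2)
  have horth : r * (cos Φ * (X - Xref θP) + sin Φ * (Y - Yref θP)) = 0 := by
    rw [← tangent_orthogonal_of_isLocalMin_sq_dist hX hY hloc]
    ring
  refine ⟨abs_sin_mul_sub_cos_mul_eq_sqrt ((mul_eq_zero.mp horth).resolve_left hr.ne'), ?_⟩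
  exact fun θ hθ => sqrt_le_sqrt (hmin hθ)

/-- At the exact projection onto a differentiable reference curve, the absolute
value of the contouring error equals the orthogonal distance of the point from
the curve, which is the minimal distance over the whole curve. -/
theorem contouring_error_is_orthogonal_distance
    (Xref Yref : ℝ → ℝ) (L : ℝ) (hL : 0 < L)
    (X Y : ℝ) (θP : ℝ) (hθP : θP ∈ Set.Ioo 0 L)
    (hmin : IsMinOn (fun θ => (X - Xref θ) ^ 2 + (Y - Yref θ) ^ 2)
      (Set.Icc 0 L) θP)
    (r Φ : ℝ) (hr : 0 < r)
    (hX : HasDerivAt Xref (r * Real.cos Φ) θP)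
    (hY : HasDerivAt Yref (r * Real.sin Φ) θP) :
    |Real.sin Φ * (X - Xref θP) - Real.cos Φ * (Y - Yref θP)| =
      Real.sqrt ((X - Xref θP) ^ 2 + (Y - Yref θP) ^ 2) ∧
    ∀ θ ∈ Set.Icc 0 L,
      Real.sqrt ((X - Xref θP) ^ 2 + (Y - Yref θP) ^ 2) ≤
        Real.sqrt ((X - Xref θ) ^ 2 + (Y - Yref θ) ^ 2) :=
  contouring_error_is_orthogonal_distance_general Xref Yref L X Y θP hθP hmin r Φ hr hX hY
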